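/- Define the integer sequence a by a_0 = 1, a_1 = 1, a_{2m} = −C_{m−1} for m ≥ 1, and a_{2m+1} = 0 for m ≥ 1 (the expansion of x + 1/c(x²) = 1 + x − x²·c(x²)). Then for every n, det((a_{i+j})_{0≤i,j≤n}) = (−1)^n·(n+1). -/

import Mathlib

/-!
Let `L` be the linear functional on `ℤ[X]` with `L (X ^ i) = a i`. Replacing the monomials
indexing the rows of the Hankel matrix by the monic rescaled Chebyshev polynomials `S k`
(`S (k + 2) = X * S (k + 1) - S k`) does not change the determinant, and turns the matrix into
`(L (S k * X ^ j))`. Now `a (i + 2) = -m i`, where `m = 1, 0, 1, 0, 2, 0, 5, …` are the aerated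
Catalan numbers (the moments of the semicircle law), and the functional with moments `m` sends
`S k * X ^ i` to `0` for `i < k` and `S k * X ^ (k + 2 * r)` to a ballot number, `1` for `r = 0`.
So the entry at `(k, j + 2)` vanishes for `j < k` and equals `-1` for `j = k`, and Laplace
expansion along column `2` leaves `(-1) ^ (n - 1)` times the `2 × 2` minor `Dₙ` of the last two
rows in columns `0, 1`. The recurrence of the `S k` gives `Dₙ₊₁ = Dₙ - L (S n * X) ^ 2 = Dₙ - 1`,
whence `Dₙ = -(n + 1)`.
-/

open Matrix Finset Polynomial Polynomial.Chebyshev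

theorem det_of_shifted_upperTriangular {R : Type*} [CommRing R] (m : ℕ) (f : ℕ → ℕ → R)
    (hf : ∀ i j, j < i → f i (j + 2) = 0) :
    det (of fun i j : Fin (m + 2) => f i j) =
      (∏ i ∈ range m, f i (i + 2)) * (f m 0 * f (m + 1) 1 - f m 1 * f (m + 1) 0) := by
  induction m generalizing f with
  | zero => simp [det_fin_two]
  | succ m ih =>
    let two : Fin (m + 3) := ⟨2, by omega⟩
    let g : ℕ → ℕ → R := fun i j => f (i + 1) (if j < 2 then j else j + 1)
    have hminor : (of fun i j : Fin (m + 3) => f i j).submatrix Fin.succ two.succAbove =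
        of fun i j : Fin (m + 2) => g i j := by
      ext i j
      simp only [submatrix_apply, of_apply, g, Fin.val_succ]
      split_ifs with h
      · rw [Fin.succAbove_of_castSucc_lt _ _ (by simpa [Fin.lt_def, two] using h)]; rfl
      · rw [Fin.succAbove_of_le_castSucc _ _ (by simp [Fin.le_def, two]; omega)]; rfl
    have hprod : ∏ i ∈ range m, g i (i + 2) = ∏ i ∈ range m, f (i + 1) (i + 1 + 2) :=
      prod_congr rfl fun i _ => by simp [g]
    have hcorner : g m 0 * g (m + 1) 1 - g m 1 * g (m + 1) 0 =
        f (m + 1) 0 * f (m + 2) 1 - f (m + 1) 1 * f (m + 2) 0 := by simp [g]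
    rw [det_succ_column _ two, Fintype.sum_eq_single 0, Fin.succAbove_zero, hminor,
      ih g fun i j hij => hf (i + 1) (j + 1) (by omega), hprod, prod_range_succ']
    · rw [hcorner]
      show (-1) ^ (0 + 2) * f 0 2 * _ = _
      ring
    · intro i hi
      have hi0 : f i (0 + 2) = 0 := hf i 0 (Nat.pos_of_ne_zero (Fin.val_ne_of_ne hi))
      rw [of_apply, hi0, mul_zero, zero_mul]

section

variable {R : Type*} [CommRing R]

noncomputable def momentFunctional (a : ℕ → R) : R[X] →ₗ[R] R :=
  lsum fun n => LinearMap.id.smulRight (a n)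

theorem momentFunctional_monomial (a : ℕ → R) (n : ℕ) (c : R) :
    momentFunctional a (monomial n c) = c * a n := by
  simp [momentFunctional, lsum_apply]

theorem momentFunctional_X_pow (a : ℕ → R) (n : ℕ) : momentFunctional a (X ^ n) = a n := by
  rw [← monomial_one_right_eq_X_pow, momentFunctional_monomial, one_mul]

theorem momentFunctional_one (a : ℕ → R) : momentFunctional a 1 = a 0 := by
  simpa using momentFunctional_X_pow a 0

theorem momentFunctional_X (a : ℕ → R) : momentFunctional a X = a 1 := by
  simpa using momentFunctional_X_pow a 1

theorem momentFunctional_eq_sum_range (a : ℕ → R) {p : R[X]} {N : ℕ} (hN : p.natDegree < N) :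
    momentFunctional a p = ∑ i ∈ range N, p.coeff i * a i := by
  simpa [momentFunctional, lsum_apply] using
    sum_over_range' p (f := fun i c => c * a i) (fun _ => zero_mul _) N hN

theorem momentFunctional_mul_X_pow (a : ℕ → R) (p : R[X]) (j : ℕ) :
    momentFunctional a (p * X ^ j) = momentFunctional (fun i => a (i + j)) p := by
  induction p using Polynomial.induction_on' with
  | add p q hp hq => rw [add_mul, map_add, map_add, hp, hq]
  | monomial n c => rw [monomial_mul_X_pow, momentFunctional_monomial, momentFunctional_monomial]

theorem momentFunctional_neg (a : ℕ → R) (p : R[X]) :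
    momentFunctional (-a) p = -momentFunctional a p := by
  simp [momentFunctional_eq_sum_range _ p.natDegree.lt_succ_self, sum_neg_distrib]

theorem det_hankel_eq_det_momentFunctional (a : ℕ → R) (p : ℕ → R[X])
    (hmonic : ∀ k, (p k).Monic) (hdeg : ∀ k, (p k).natDegree = k) (n : ℕ) :
    det (of fun i j : Fin n => a (i + j)) =
      det (of fun i j : Fin n => momentFunctional a (p i * X ^ (j : ℕ))) := by
  set P : Matrix (Fin n) (Fin n) R := of fun i k => (p i).coeff k
  have hP : P.det = 1 := by
    rw [det_of_isLowerTriangular P fun i k hik =>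
      coeff_eq_zero_of_natDegree_lt ((hdeg i).trans_lt hik)]
    exact prod_eq_one fun i _ => by simpa [P, hdeg] using (hmonic i).coeff_natDegree
  have hmul : (of fun i j : Fin n => momentFunctional a (p i * X ^ (j : ℕ))) =
      P * of fun i j : Fin n => a (i + j) := by
    ext i j
    rw [of_apply, momentFunctional_mul_X_pow,
      momentFunctional_eq_sum_range _ ((hdeg i).trans_lt i.isLt), mul_apply,
      ← Fin.sum_univ_eq_sum_range (fun k => (p i).coeff k * a (k + j))]
    rfl
  rw [hmul, det_mul, hP, one_mul]

theorem degree_S_natCast [Nontrivial R] (n : ℕ) : (S R n).degree = n := by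
  induction n using Nat.twoStepInduction with
  | zero => simp
  | one => simp
  | more n ih1 ih2 =>
    push_cast at ih2 ⊢
    have h : (X * S R (n + 1)).degree = ((n + 2 : ℕ) : WithBot ℕ) := by
      rw [mul_comm, degree_mul_X, ih2, add_assoc]; rfl
    rw [S_add_two, degree_sub_eq_left_of_degree_lt] <;> rw [h]
    · norm_cast
    · rw [ih1]; exact_mod_cast (by omega : n < n + 2)

theorem monic_S_natCast [Nontrivial R] (n : ℕ) : (S R n).Monic := by
  induction n using Nat.twoStepInduction with
  | zero => simp
  | one => simp
  | more n ih1 ih2 =>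
    push_cast at ih2 ⊢
    rw [S_add_two]
    refine (monic_X.mul ih2).sub_of_left ?_
    rw [mul_comm, degree_mul_X, ← Nat.cast_one, ← Nat.cast_add, degree_S_natCast,
      degree_S_natCast]
    exact_mod_cast (by omega : n < n + 1 + 1)

theorem momentFunctional_S_add_two_mul_X_pow (a : ℕ → R) (k i : ℕ) :
    momentFunctional a (S R (k + 2 : ℕ) * X ^ i) =
      momentFunctional a (S R (k + 1 : ℕ) * X ^ (i + 1)) - momentFunctional a (S R k * X ^ i) := by
  push_cast
  rw [S_add_two, ← map_sub]
  congr 1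
  ring

end

/-- The number of `±1` lattice paths from height `0` to height `k` with `k + 2 * r` steps that
never go below `0` (reflection principle). -/
def ballot (k r : ℕ) : ℤ := (k + 2 * r).choose r - (k + 2 * r).choose (k + r + 1)

theorem ballot_zero_right (k : ℕ) : ballot k 0 = 1 := by
  simp [ballot]

theorem ballot_add_two_left (k r : ℕ) :
    ballot (k + 2) r = ballot (k + 1) (r + 1) - ballot k (r + 1) := by
  simp only [ballot]
  rw [show k + 1 + 2 * (r + 1) = k + 2 + 2 * r + 1 by ring,
    show k + 2 * (r + 1) = k + 2 + 2 * r by ring, show k + 2 + r + 1 = k + r + 2 + 1 by ring,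
    show k + 1 + (r + 1) + 1 = k + r + 2 + 1 by ring, show k + (r + 1) + 1 = k + r + 2 by ring,
    Nat.choose_succ_succ', Nat.choose_succ_succ']
  push_cast
  ring

theorem ballot_one_left (r : ℕ) : ballot 1 r = ballot 0 (r + 1) := by
  simp only [ballot]
  rw [show 0 + 2 * (r + 1) = 1 + 2 * r + 1 by ring, show 1 + r + 1 = r + 1 + 1 by ring,
    show 0 + (r + 1) + 1 = r + 1 + 1 by ring, Nat.choose_succ_succ', Nat.choose_succ_succ']
  push_cast
  ring

theorem ballot_zero_left (r : ℕ) : ballot 0 r = catalan r := by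
  refine mul_left_cancel₀ (by positivity : (r + 1 : ℤ) ≠ 0) ?_
  have hcat := succ_mul_catalan_eq_centralBinom r
  have hsucc := Nat.choose_succ_right_eq (2 * r) r
  rw [Nat.centralBinom_eq_two_mul_choose] at hcat
  rw [show 2 * r - r = r by omega] at hsucc
  simp only [ballot, zero_add]
  zify at hcat hsucc
  linear_combination -hcat - hsucc

def aeratedCatalan (i : ℕ) : ℤ := if Even i then catalan (i / 2) else 0

theorem aeratedCatalan_two_mul (r : ℕ) : aeratedCatalan (2 * r) = catalan r := by
  simp [aeratedCatalan]

theorem aeratedCatalan_of_odd {i : ℕ} (hi : Odd i) : aeratedCatalan i = 0 := by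
  simp [aeratedCatalan, Nat.not_even_iff_odd.2 hi]

theorem momentFunctional_aeratedCatalan_S_mul_X_pow_of_odd {k i : ℕ} (h : Odd (k + i)) :
    momentFunctional aeratedCatalan (S ℤ k * X ^ i) = 0 := by
  induction k using Nat.twoStepInduction generalizing i with
  | zero => simpa [momentFunctional_X_pow] using aeratedCatalan_of_odd (by simpa using h)
  | one =>
    rw [Nat.cast_one, S_one, ← pow_succ', momentFunctional_X_pow]
    exact aeratedCatalan_of_odd (by rwa [add_comm])
  | more k ih1 ih2 =>
    obtain ⟨t, ht⟩ := h
    rw [momentFunctional_S_add_two_mul_X_pow, ih1 ⟨t - 1, by omega⟩, ih2 ⟨t, by omega⟩, sub_zero]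

theorem momentFunctional_aeratedCatalan_S_mul_X_pow_add_two_mul (k r : ℕ) :
    momentFunctional aeratedCatalan (S ℤ k * X ^ (k + 2 * r)) = ballot k r := by
  induction k using Nat.twoStepInduction generalizing r with
  | zero => simp [momentFunctional_X_pow, aeratedCatalan_two_mul, ballot_zero_left]
  | one =>
    rw [Nat.cast_one, S_one, ← pow_succ', momentFunctional_X_pow, ballot_one_left,
      ballot_zero_left, show 1 + 2 * r + 1 = 2 * (r + 1) by ring, aeratedCatalan_two_mul]
  | more k ih1 ih2 =>
    rw [momentFunctional_S_add_two_mul_X_pow, ballot_add_two_left, ← ih1, ← ih2,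
      show k + 2 + 2 * r + 1 = k + 1 + 2 * (r + 1) by ring,
      show k + 2 + 2 * r = k + 2 * (r + 1) by ring]

theorem momentFunctional_aeratedCatalan_S_mul_X_pow_self (k : ℕ) :
    momentFunctional aeratedCatalan (S ℤ k * X ^ k) = 1 := by
  simpa [ballot_zero_right] using momentFunctional_aeratedCatalan_S_mul_X_pow_add_two_mul k 0

theorem momentFunctional_aeratedCatalan_S_mul_X_pow_of_lt {k i : ℕ} (h : i < k) :
    momentFunctional aeratedCatalan (S ℤ k * X ^ i) = 0 := by
  induction k using Nat.twoStepInduction generalizing i with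
  | zero => omega
  | one => exact momentFunctional_aeratedCatalan_S_mul_X_pow_of_odd ⟨0, by omega⟩
  | more k ih1 ih2 =>
    rw [momentFunctional_S_add_two_mul_X_pow]
    rcases lt_trichotomy i k with hik | rfl | hik
    · rw [ih1 hik, ih2 (by omega), sub_zero]
    · rw [momentFunctional_aeratedCatalan_S_mul_X_pow_self,
        momentFunctional_aeratedCatalan_S_mul_X_pow_self, sub_self]
    · rw [momentFunctional_aeratedCatalan_S_mul_X_pow_of_odd ⟨k + 1, by omega⟩,
        momentFunctional_aeratedCatalan_S_mul_X_pow_of_odd ⟨k, by omega⟩, sub_zero]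

section

variable {a : ℕ → ℤ}

theorem momentFunctional_mul_X_pow_add_two (ha : ∀ i, a (i + 2) = -aeratedCatalan i)
    (p : ℤ[X]) (j : ℕ) :
    momentFunctional a (p * X ^ (j + 2)) = -momentFunctional aeratedCatalan (p * X ^ j) := by
  have hshift : (fun i => a (i + (j + 2))) = -fun i => aeratedCatalan (i + j) :=
    funext fun i => by rw [← add_assoc, ha]; rfl
  rw [momentFunctional_mul_X_pow, momentFunctional_mul_X_pow, hshift, momentFunctional_neg]

theorem momentFunctional_S_mul_X_pow_add_two_of_lt (ha : ∀ i, a (i + 2) = -aeratedCatalan i)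
    {k j : ℕ} (h : j < k) : momentFunctional a (S ℤ k * X ^ (j + 2)) = 0 := by
  rw [momentFunctional_mul_X_pow_add_two ha, momentFunctional_aeratedCatalan_S_mul_X_pow_of_lt h,
    neg_zero]

theorem momentFunctional_S_mul_X_pow_add_two_self (ha : ∀ i, a (i + 2) = -aeratedCatalan i)
    (k : ℕ) : momentFunctional a (S ℤ k * X ^ (k + 2)) = -1 := by
  rw [momentFunctional_mul_X_pow_add_two ha, momentFunctional_aeratedCatalan_S_mul_X_pow_self]

theorem momentFunctional_S_add_two_mul_X (ha : ∀ i, a (i + 2) = -aeratedCatalan i) (k : ℕ) :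
    momentFunctional a (S ℤ (k + 2 : ℕ) * X) = -momentFunctional a (S ℤ k * X) := by
  have h := momentFunctional_S_add_two_mul_X_pow a k 1
  rwa [momentFunctional_S_mul_X_pow_add_two_of_lt ha (j := 0) k.succ_pos, zero_sub, pow_one] at h

theorem sq_momentFunctional_S_mul_X (ha : ∀ i, a (i + 2) = -aeratedCatalan i) (h1 : a 1 = 1)
    (k : ℕ) : momentFunctional a (S ℤ k * X) ^ 2 = 1 := by
  induction k using Nat.twoStepInduction with
  | zero => simp [momentFunctional_X, h1]
  | one => simp [← sq, momentFunctional_X_pow, ha 0, aeratedCatalan]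
  | more k ih1 => rw [momentFunctional_S_add_two_mul_X ha, neg_sq, ih1]

theorem momentFunctional_S_minor (ha : ∀ i, a (i + 2) = -aeratedCatalan i) (h0 : a 0 = 1)
    (h1 : a 1 = 1) (m : ℕ) :
    momentFunctional a (S ℤ m) * momentFunctional a (S ℤ (m + 1 : ℕ) * X) -
      momentFunctional a (S ℤ m * X) * momentFunctional a (S ℤ (m + 1 : ℕ)) = -(m + 2) := by
  induction m with
  | zero =>
    simp [← sq, momentFunctional_one, momentFunctional_X, momentFunctional_X_pow, h0, h1, ha 0,
      aeratedCatalan]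
  | succ m ih =>
    have h := momentFunctional_S_add_two_mul_X_pow a m 0
    simp only [pow_zero, mul_one, zero_add, pow_one] at h
    rw [show m + 1 + 1 = m + 2 from rfl, h, momentFunctional_S_add_two_mul_X ha]
    linear_combination ih - sq_momentFunctional_S_mul_X ha h1 (m + 1) + Int.natCast_succ m

end

/-- The Hankel transform of the sequence `1, 1, -C_0, 0, -C_1, 0, -C_2, 0, …` (the
expansion of `x + 1/c(x²) = 1 + x - x²·c(x²)`) is `(-1)^n · (n+1)`. -/
theorem hankel_transform_one_add_x_sub_xsq_catalanSq (a : ℕ → ℤ)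
    (h0 : a 0 = 1) (h1 : a 1 = 1)
    (heven : ∀ m : ℕ, 1 ≤ m → a (2 * m) = -(catalan (m - 1) : ℤ))
    (hodd : ∀ m : ℕ, 1 ≤ m → a (2 * m + 1) = 0) (n : ℕ) :
    Matrix.det (Matrix.of fun i j : Fin (n + 1) => a (i.1 + j.1)) =
      (-1) ^ n * (n + 1) := by
  have ha : ∀ i, a (i + 2) = -aeratedCatalan i := by
    intro i
    obtain ⟨r, rfl | rfl⟩ := Nat.even_or_odd' i
    · rw [aeratedCatalan_two_mul, show 2 * r + 2 = 2 * (r + 1) by ring,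
        heven (r + 1) (Nat.le_add_left 1 r), Nat.add_sub_cancel]
    · rw [aeratedCatalan_of_odd ⟨r, rfl⟩, show 2 * r + 1 + 2 = 2 * (r + 1) + 1 by ring,
        hodd (r + 1) (Nat.le_add_left 1 r), neg_zero]
  rcases n with _ | m
  · simp [h0]
  rw [det_hankel_eq_det_momentFunctional a (fun k => S ℤ k) monic_S_natCast
      (fun k => natDegree_eq_of_degree_eq_some (degree_S_natCast k)),
    det_of_shifted_upperTriangular m (fun i j => momentFunctional a (S ℤ i * X ^ j))
      fun i j => momentFunctional_S_mul_X_pow_add_two_of_lt ha]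
  simp only [momentFunctional_S_mul_X_pow_add_two_self ha, prod_const, card_range, pow_zero,
    mul_one, pow_one, momentFunctional_S_minor ha h0 h1]
  push_cast
  ring
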